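/- Define the covector field X on ℝⁿ by X_α(x) = A_α + (A_{αλ} + 2 C_α C_λ) x^λ + B x_α + 2 B_λ x^λ x_α − B_α x_λ x^λ, where x_α = η_{αλ} x^λ. Then X is a null-like disformal Killing vector of the flat metric η with U_α = 2 C_α: for all x ∈ ℝⁿ, ∂_λ X_α + ∂_α X_λ = (2/n) η_{λα} (η^{cb} ∂_c X_b) + 4 C_λ C_α, and moreover (2/n) η^{cb} ∂_c X_b = 2B + 4 B_λ x^λ. -/

import Mathlib

open Matrix

/-- Partial derivative `∂_c f` of a scalar field on `ℝⁿ`. -/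
noncomputable def pd {n : ℕ} (f : (Fin n → ℝ) → ℝ) (c : Fin n) (x : Fin n → ℝ) : ℝ :=
  fderiv ℝ f x (Pi.single c 1)

/-- The covector field
`X_α(x) = A_α + (A_{αλ} + 2 C_α C_λ) x^λ + B x_α + 2 B_λ x^λ x_α − B_α x_λ x^λ`,
where indices are lowered with `η` (`x_α = η_{αλ} x^λ`). -/
noncomputable def Xfield {n : ℕ} (η : Matrix (Fin n) (Fin n) ℝ)
    (A B' C : Fin n → ℝ) (A' : Matrix (Fin n) (Fin n) ℝ) (B : ℝ)
    (x : Fin n → ℝ) (a : Fin n) : ℝ :=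
  A a + (∑ l, (A' a l + 2 * C a * C l) * x l) + B * (∑ l, η a l * x l) +
    2 * (∑ l, B' l * x l) * (∑ l, η a l * x l) -
    B' a * (∑ l, x l * (∑ m, η l m * x m))

noncomputable def dotC {n : ℕ} (v : Fin n → ℝ) : (Fin n → ℝ) →L[ℝ] ℝ :=
  ∑ l, v l • (ContinuousLinearMap.proj l : (Fin n → ℝ) →L[ℝ] ℝ)

lemma hasFDerivAt_dot {n : ℕ} (v : Fin n → ℝ) (x : Fin n → ℝ) :
    HasFDerivAt (fun y : Fin n → ℝ => ∑ l, v l * y l) (dotC v) x := by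
  apply HasFDerivAt.fun_sum
  intro l _
  exact ((ContinuousLinearMap.proj l : (Fin n → ℝ) →L[ℝ] ℝ).hasFDerivAt (x := x)).const_mul (v l)

lemma dotC_single {n : ℕ} (v : Fin n → ℝ) (c : Fin n) : dotC v (Pi.single c 1) = v c := by
  simp [dotC, ContinuousLinearMap.sum_apply, Pi.single_apply, mul_ite]

open scoped BigOperators

lemma pd_Xfield {n : ℕ} (η : Matrix (Fin n) (Fin n) ℝ) (A B' C : Fin n → ℝ)
    (A' : Matrix (Fin n) (Fin n) ℝ) (B : ℝ) (x : Fin n → ℝ) (a c : Fin n) :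
    pd (fun y => Xfield η A B' C A' B y a) c x =
      (A' a c + 2 * C a * C c) + B * η a c
      + 2 * (∑ m, B' m * x m) * η a c + 2 * B' c * (∑ m, η a m * x m)
      - B' a * ((∑ m, η c m * x m) + (∑ m, x m * η m c)) := by
  have h : HasFDerivAt (fun y : Fin n → ℝ => Xfield η A B' C A' B y a)
      ((((0 : (Fin n → ℝ) →L[ℝ] ℝ) + dotC (fun l => A' a l + 2 * C a * C l)
          + B • dotC (η a))
          + ((2 * ∑ m, B' m * x m) • dotC (η a) + (∑ m, η a m * x m) • ((2:ℝ) • dotC B')))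
        - B' a • (∑ l, (((ContinuousLinearMap.proj l : (Fin n → ℝ) →L[ℝ] ℝ) x) • dotC (η l) +
            (∑ m, η l m * x m) • (ContinuousLinearMap.proj l : (Fin n → ℝ) →L[ℝ] ℝ)))) x := by
    unfold Xfield
    exact ((((hasFDerivAt_const (A a) x).add (hasFDerivAt_dot _ x)).add
        ((hasFDerivAt_dot (η a) x).const_mul B)).add
        (((hasFDerivAt_dot B' x).const_mul 2).mul (hasFDerivAt_dot (η a) x))).sub
        ((HasFDerivAt.fun_sum (fun l _ =>
          ((ContinuousLinearMap.proj l : (Fin n → ℝ) →L[ℝ] ℝ).hasFDerivAt (x := x)).mul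
            (hasFDerivAt_dot (η l) x))).const_mul (B' a))
  rw [pd, h.fderiv]
  simp [ContinuousLinearMap.sum_apply, dotC_single, Pi.single_apply, mul_ite, mul_add,
    Finset.mul_sum, Finset.sum_add_distrib, mul_comm, mul_assoc, mul_left_comm]
  ring

/-- the covector field `X` above is a null-like disformal Killing
vector of the flat metric `η` with `U_α = 2 C_α`:
`∂_λ X_α + ∂_α X_λ = (2/n) η_{λα} (η^{cb} ∂_c X_b) + 4 C_λ C_α`, and
`(2/n) η^{cb} ∂_c X_b = 2B + 4 B_λ x^λ`. -/
theorem disformal_killing_solution {n : ℕ} (hn : 1 ≤ n)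
    (η : Matrix (Fin n) (Fin n) ℝ) (hη : IsUnit η.det) (hηsym : η.IsSymm)
    (A B' C : Fin n → ℝ) (A' : Matrix (Fin n) (Fin n) ℝ) (B : ℝ)
    (hA' : ∀ a l, A' a l = -A' l a)
    (hC : C ⬝ᵥ η⁻¹.mulVec C = 0) :
    (∀ x : Fin n → ℝ, ∀ l a : Fin n,
      pd (fun y => Xfield η A B' C A' B y a) l x +
          pd (fun y => Xfield η A B' C A' B y l) a x =
        (2 / (n : ℝ)) * η l a *
            (∑ c, ∑ b, η⁻¹ c b * pd (fun y => Xfield η A B' C A' B y b) c x) +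
          4 * C l * C a) ∧
    (∀ x : Fin n → ℝ,
      (2 / (n : ℝ)) *
          (∑ c, ∑ b, η⁻¹ c b * pd (fun y => Xfield η A B' C A' B y b) c x) =
        2 * B + 4 * (∑ l, B' l * x l)) := by
  have hn0 : (n : ℝ) ≠ 0 := Nat.cast_ne_zero.mpr (by omega)
  have hsym : ∀ i j, η i j = η j i := fun i j => by
    conv_lhs => rw [← hηsym]
    rfl
  have hinvsym : ∀ i j, η⁻¹ i j = η⁻¹ j i := fun i j => by
    have h : (η⁻¹)ᵀ = η⁻¹ := by rw [Matrix.transpose_nonsing_inv, hηsym]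
    conv_lhs => rw [← h]
    rfl
  have hinv : η⁻¹ * η = 1 := Matrix.nonsing_inv_mul η hη
  -- key: (η⁻¹ η x)_c = x_c
  have hkey : ∀ (x : Fin n → ℝ) (c : Fin n),
      (∑ b, η⁻¹ c b * (∑ m, η b m * x m)) = x c := by
    intro x c
    have h1 : (η⁻¹ * η).mulVec x = x := by rw [hinv, Matrix.one_mulVec]
    have h2 : η⁻¹.mulVec (η.mulVec x) = x := by rw [Matrix.mulVec_mulVec, h1]
    have := congrFun h2 c
    simpa [Matrix.mulVec, dotProduct] using this
  have htr : (∑ c, ∑ b, η⁻¹ c b * η b c) = (n : ℝ) := by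
    have h1 : ∀ c, (∑ b, η⁻¹ c b * η b c) = (1 : Matrix (Fin n) (Fin n) ℝ) c c := by
      intro c; rw [← hinv]; simp [Matrix.mul_apply]
    simp [h1, Matrix.one_apply]
  -- the trace
  have hT : ∀ x : Fin n → ℝ,
      (∑ c, ∑ b, η⁻¹ c b * pd (fun y => Xfield η A B' C A' B y b) c x)
        = (n : ℝ) * B + 2 * (n : ℝ) * (∑ m, B' m * x m) := by
    intro x
    have e1 : ∀ c b : Fin n, η⁻¹ c b * pd (fun y => Xfield η A B' C A' B y b) c x
        = η⁻¹ c b * A' b c + 2 * (η⁻¹ c b * (C b * C c)) + B * (η⁻¹ c b * η b c)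
          + 2 * (∑ m, B' m * x m) * (η⁻¹ c b * η b c)
          + 2 * (B' c * (η⁻¹ c b * (∑ m, η b m * x m)))
          - 2 * (B' b * (η⁻¹ c b * (∑ m, η c m * x m))) := by
      intro c b
      rw [pd_Xfield]
      have h3 : (∑ m, x m * η m c) = ∑ m, η c m * x m :=
        Finset.sum_congr rfl fun m _ => by rw [hsym c m]; ring
      rw [h3]; ring
    have hT1 : (∑ c, ∑ b, η⁻¹ c b * A' b c) = 0 := by
      have h2 : (∑ c, ∑ b, η⁻¹ c b * A' b c) = -(∑ c, ∑ b, η⁻¹ c b * A' b c) := by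
        calc (∑ c, ∑ b, η⁻¹ c b * A' b c) = ∑ b, ∑ c, η⁻¹ c b * A' b c := Finset.sum_comm
          _ = ∑ b, ∑ c, -(η⁻¹ b c * A' c b) := by
              refine Finset.sum_congr rfl fun b _ => Finset.sum_congr rfl fun c _ => ?_
              rw [hinvsym c b, hA' b c]; ring
          _ = -(∑ c, ∑ b, η⁻¹ c b * A' b c) := by
              simp [Finset.sum_neg_distrib]
      linarith
    have hT2 : (∑ c, ∑ b, η⁻¹ c b * (C b * C c)) = 0 := by
      rw [← hC]
      simp only [dotProduct, Matrix.mulVec, Finset.mul_sum]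
      exact Finset.sum_congr rfl fun c _ => Finset.sum_congr rfl fun b _ => by ring
    have hT5 : (∑ c, ∑ b, B' c * (η⁻¹ c b * (∑ m, η b m * x m))) = ∑ m, B' m * x m := by
      refine Finset.sum_congr rfl fun c _ => ?_
      rw [← Finset.mul_sum, hkey x c]
    have hT6 : (∑ c, ∑ b, B' b * (η⁻¹ c b * (∑ m, η c m * x m))) = ∑ m, B' m * x m := by
      rw [Finset.sum_comm]
      refine Finset.sum_congr rfl fun b _ => ?_
      have : ∀ c, B' b * (η⁻¹ c b * (∑ m, η c m * x m))
          = B' b * (η⁻¹ b c * (∑ m, η c m * x m)) := fun c => by rw [hinvsym c b]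
      simp only [this]
      rw [← Finset.mul_sum, hkey x b]
    simp only [e1, Finset.sum_add_distrib, Finset.sum_sub_distrib, ← Finset.mul_sum]
    rw [hT1, hT2, htr, hT6]
    simp only [hkey x]
    ring
  constructor
  · intro x l a
    rw [pd_Xfield, pd_Xfield, hT x]
    have h3 : ∀ i : Fin n, (∑ m, x m * η m i) = ∑ m, η i m * x m := fun i =>
      Finset.sum_congr rfl fun m _ => by rw [hsym i m]; ring
    rw [h3 l, h3 a, hA' l a, hsym a l]
    field_simp
    ring
  · intro x
    rw [hT x]
    field_simp
    ring
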